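/- arXiv:2003.01972 — 4 statements merged into one kernel-verified Lean document; each statement's English description precedes it below -/
import Mathlib

section
/- Let D ≥ 2, R > 0, σ > 0, and define f(r) = exp(-r²/(2σ²)) · ∫₀^π sin^{D-2}(φ) · exp(rR cos(φ)/σ²) dφ for r ≥ 0. If σ ≥ R/√(D-1), then f attains its global maximum over [0,∞) at r = 0. -/
/-!
Put `m = D - 2`, `a = r R / σ²` and `G(a) = ∫₀^π sin^m φ e^{a cos φ} dφ`, so that
`f(r) = e^{-r²/(2σ²)} G(a)`. Integrating by parts,
`(m + 1) G'(a) = a ∫₀^π sin^{m+2} φ e^{a cos φ} dφ`, which is at most `a G(a)` for `a ≥ 0`.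
Hence `G(a) e^{-a²/(2(m+1))}` is nonincreasing on `[0, ∞)`.
The condition `σ² (D - 1) ≥ R²` says precisely that `a² / (2(m+1)) ≤ r² / (2σ²)`, so
`f(r) ≤ G(a) e^{-a²/(2(m+1))} ≤ G(0) = f(0)`.
-/

open Real MeasureTheory intervalIntegral

noncomputable def sinPowExpCosIntegral (m : ℕ) (a : ℝ) : ℝ :=
  ∫ φ in (0:ℝ)..π, sin φ ^ m * exp (a * cos φ)

theorem sinPowExpCosIntegral_nonneg (m : ℕ) (a : ℝ) : 0 ≤ sinPowExpCosIntegral m a :=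
  integral_nonneg pi_pos.le fun _ hφ =>
    mul_nonneg (pow_nonneg (sin_nonneg_of_nonneg_of_le_pi hφ.1 hφ.2) m) (exp_pos _).le

theorem sinPowExpCosIntegral_add_two_le (m : ℕ) (a : ℝ) :
    sinPowExpCosIntegral (m + 2) a ≤ sinPowExpCosIntegral m a := by
  refine integral_mono_on pi_pos.le (Continuous.intervalIntegrable (by fun_prop) _ _)
    (Continuous.intervalIntegrable (by fun_prop) _ _) fun φ hφ => ?_
  have hsin : 0 ≤ sin φ := sin_nonneg_of_nonneg_of_le_pi hφ.1 hφ.2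
  exact mul_le_mul_of_nonneg_right (pow_le_pow_of_le_one hsin (sin_le_one φ) (by omega))
    (exp_pos _).le

theorem norm_sin_pow_mul_exp_mul_cos_mul_cos_le {x b : ℝ} (hx : |x| ≤ b) (m : ℕ) (φ : ℝ) :
    ‖sin φ ^ m * (exp (x * cos φ) * cos φ)‖ ≤ exp b := by
  have hsin : |sin φ| ^ m ≤ 1 := pow_le_one₀ (abs_nonneg _) (abs_sin_le_one φ)
  have hcos : |cos φ| ≤ 1 := abs_cos_le_one φ
  have hexp : exp (x * cos φ) ≤ exp b := exp_le_exp.2 <|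
    calc x * cos φ ≤ |x| * |cos φ| := abs_mul x (cos φ) ▸ le_abs_self _
      _ ≤ |x| := mul_le_of_le_one_right (abs_nonneg x) hcos
      _ ≤ b := hx
  rw [Real.norm_eq_abs, abs_mul, abs_mul, abs_pow, abs_of_pos (exp_pos _)]
  calc |sin φ| ^ m * (exp (x * cos φ) * |cos φ|) ≤ 1 * (exp b * 1) := by gcongr
    _ = exp b := by ring

theorem hasDerivAt_sinPowExpCosIntegral (m : ℕ) (a : ℝ) :
    HasDerivAt (sinPowExpCosIntegral m)
      (∫ φ in (0:ℝ)..π, sin φ ^ m * (exp (a * cos φ) * cos φ)) a := by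
  refine (hasDerivAt_integral_of_dominated_loc_of_deriv_le
    (F := fun x φ => sin φ ^ m * exp (x * cos φ))
    (F' := fun x φ => sin φ ^ m * (exp (x * cos φ) * cos φ)) (bound := fun _ => exp (|a| + 1))
    (Metric.ball_mem_nhds a one_pos)
    (Filter.Eventually.of_forall fun x => (Continuous.aestronglyMeasurable (by fun_prop)))
    (Continuous.intervalIntegrable (by fun_prop) _ _)
    (Continuous.aestronglyMeasurable (by fun_prop)) ?_ intervalIntegrable_const ?_).2
  · refine Filter.Eventually.of_forall fun φ _ x hx => ?_
    refine norm_sin_pow_mul_exp_mul_cos_mul_cos_le ?_ m φ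
    rw [Metric.mem_ball, Real.dist_eq] at hx
    linarith [abs_sub_abs_le_abs_sub x a]
  · exact Filter.Eventually.of_forall fun φ _ x _ =>
      ((hasDerivAt_mul_const (cos φ)).exp).const_mul (sin φ ^ m)

theorem integral_sin_pow_mul_exp_mul_cos_mul_cos (m : ℕ) (a : ℝ) :
    ∫ φ in (0:ℝ)..π, sin φ ^ m * (exp (a * cos φ) * cos φ)
      = a / (m + 1) * sinPowExpCosIntegral (m + 2) a := by
  have hu : ∀ φ ∈ Set.uIcc 0 π, HasDerivAt (fun φ => sin φ ^ (m + 1))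
      ((m + 1) * sin φ ^ m * cos φ) φ := fun φ _ => by
    simpa using (hasDerivAt_sin φ).fun_pow (m + 1)
  have hv : ∀ φ ∈ Set.uIcc 0 π, HasDerivAt (fun φ => exp (a * cos φ))
      (exp (a * cos φ) * (a * -sin φ)) φ := fun φ _ =>
    ((hasDerivAt_cos φ).const_mul a).exp
  have hparts := integral_deriv_mul_eq_sub hu hv (Continuous.intervalIntegrable (by fun_prop) _ _)
    (Continuous.intervalIntegrable (by fun_prop) _ _)
  simp only [sin_pi, sin_zero, zero_pow (Nat.succ_ne_zero m), zero_mul, sub_self] at hparts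
  have hsplit : ∀ φ, (m + 1) * sin φ ^ m * cos φ * exp (a * cos φ)
      + sin φ ^ (m + 1) * (exp (a * cos φ) * (a * -sin φ))
      = (m + 1) * (sin φ ^ m * (exp (a * cos φ) * cos φ))
        - a * (sin φ ^ (m + 2) * exp (a * cos φ)) := fun φ => by ring
  rw [integral_congr fun φ _ => hsplit φ,
    intervalIntegral.integral_sub (Continuous.intervalIntegrable (by fun_prop) _ _)
      (Continuous.intervalIntegrable (by fun_prop) _ _),
    intervalIntegral.integral_const_mul, intervalIntegral.integral_const_mul] at hparts
  rw [sinPowExpCosIntegral, div_mul_eq_mul_div, eq_div_iff (by positivity)]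
  linarith

theorem antitoneOn_sinPowExpCosIntegral_mul_exp (m : ℕ) :
    AntitoneOn (fun a => sinPowExpCosIntegral m a * exp (-a ^ 2 / (2 * (m + 1))))
      (Set.Ici 0) := by
  have hderiv : ∀ a, HasDerivAt (fun a => sinPowExpCosIntegral m a * exp (-a ^ 2 / (2 * (m + 1))))
      (exp (-a ^ 2 / (2 * (m + 1))) * a / (m + 1)
        * (sinPowExpCosIntegral (m + 2) a - sinPowExpCosIntegral m a)) a := fun a => by
    have hexp : HasDerivAt (fun a : ℝ => exp (-a ^ 2 / (2 * (m + 1))))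
        (exp (-a ^ 2 / (2 * (m + 1))) * (-(2 * a) / (2 * (m + 1)))) a := by
      simpa using ((hasDerivAt_pow 2 a).neg.div_const (2 * (m + 1 : ℝ))).exp
    refine ((hasDerivAt_sinPowExpCosIntegral m a).mul hexp).congr_deriv ?_
    rw [integral_sin_pow_mul_exp_mul_cos_mul_cos]
    field_simp
    ring
  refine antitoneOn_of_hasDerivWithinAt_nonpos (convex_Ici 0)
    (HasDerivAt.continuousOn fun a _ => hderiv a) (fun a _ => (hderiv a).hasDerivWithinAt)
    fun a ha => mul_nonpos_of_nonneg_of_nonpos ?_ ?_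
  · rw [interior_Ici] at ha
    exact div_nonneg (mul_nonneg (exp_pos _).le (le_of_lt ha)) (by positivity)
  · exact sub_nonpos.2 (sinPowExpCosIntegral_add_two_le m a)

theorem exp_neg_mul_sinPowExpCosIntegral_le (m : ℕ) {a c : ℝ} (ha : 0 ≤ a)
    (hac : a ^ 2 ≤ 2 * (m + 1) * c) :
    exp (-c) * sinPowExpCosIntegral m a ≤ sinPowExpCosIntegral m 0 := by
  have hexp : exp (-c) ≤ exp (-a ^ 2 / (2 * (m + 1))) := exp_le_exp.2 <| by
    rw [neg_div, neg_le_neg_iff, div_le_iff₀ (by positivity)]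
    linarith
  calc exp (-c) * sinPowExpCosIntegral m a
      ≤ sinPowExpCosIntegral m a * exp (-a ^ 2 / (2 * (m + 1))) := by
        rw [mul_comm]; gcongr; exact sinPowExpCosIntegral_nonneg m a
    _ ≤ sinPowExpCosIntegral m 0 * exp (-0 ^ 2 / (2 * (m + 1))) :=
        antitoneOn_sinPowExpCosIntegral_mul_exp m Set.self_mem_Ici ha ha
    _ = sinPowExpCosIntegral m 0 := by simp

theorem stmt_0_general (D : ℕ) (hD : 2 ≤ D) (R σ : ℝ) (hR : 0 < R)
    (f : ℝ → ℝ)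
    (hf : ∀ r : ℝ, f r = Real.exp (-r ^ 2 / (2 * σ ^ 2)) *
      ∫ φ in (0:ℝ)..Real.pi,
        Real.sin φ ^ (D - 2) * Real.exp (r * R * Real.cos φ / σ ^ 2))
    (hσR : σ ≥ R / Real.sqrt (D - 1)) :
    ∀ r : ℝ, 0 ≤ r → f r ≤ f 0 := by
  intro r hr
  have hD1 : ((D - 2 : ℕ) : ℝ) + 1 = D - 1 := by rw [Nat.cast_sub hD]; ring
  have hR2 : R ^ 2 ≤ σ ^ 2 * (D - 1) := by
    have hsqrt : 0 < √((D : ℝ) - 1) := sqrt_pos.2 (by rw [← hD1]; positivity)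
    rw [ge_iff_le, div_le_iff₀ hsqrt] at hσR
    calc R ^ 2 ≤ (σ * √((D : ℝ) - 1)) ^ 2 := pow_le_pow_left₀ hR.le hσR 2
      _ = σ ^ 2 * (D - 1) := by rw [mul_pow, sq_sqrt (by rw [← hD1]; positivity)]
  have hf' : ∀ r, f r =
      exp (-(r ^ 2 / (2 * σ ^ 2))) * sinPowExpCosIntegral (D - 2) (r * R / σ ^ 2) := fun r => by
    simp only [hf, sinPowExpCosIntegral, neg_div, mul_div_right_comm]
  have hf0 : f 0 = sinPowExpCosIntegral (D - 2) 0 := by simp [hf']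
  rw [hf0, hf']
  refine exp_neg_mul_sinPowExpCosIntegral_le _ (by positivity) ?_
  calc (r * R / σ ^ 2) ^ 2 = r ^ 2 * R ^ 2 / (σ ^ 2) ^ 2 := by ring
    _ ≤ r ^ 2 * (σ ^ 2 * (D - 1)) / (σ ^ 2) ^ 2 := by gcongr
    _ = 2 * (((D - 2 : ℕ) : ℝ) + 1) * (r ^ 2 / (2 * σ ^ 2)) := by
      rw [hD1]; field_simp

theorem stmt_0 (D : ℕ) (hD : 2 ≤ D) (R σ : ℝ) (hR : 0 < R) (hσ : 0 < σ)
    (f : ℝ → ℝ)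
    (hf : ∀ r : ℝ, f r = Real.exp (-r ^ 2 / (2 * σ ^ 2)) *
      ∫ φ in (0:ℝ)..Real.pi,
        Real.sin φ ^ (D - 2) * Real.exp (r * R * Real.cos φ / σ ^ 2))
    (hσR : σ ≥ R / Real.sqrt (D - 1)) :
    ∀ r : ℝ, 0 ≤ r → f r ≤ f 0 :=
  stmt_0_general D hD R σ hR f hf hσR
end

section
/- Let D ≥ 2, R > 0, σ > 0, r ≥ 0, and f(r) = exp(-r²/(2σ²)) · ∫₀^π sin^{D-2}(φ) · exp(rR cos(φ)/σ²) dφ. Then f'(r) has the same sign as ∫₀^π (r/σ²)·(R² sin²(φ)/((D-1)σ²) - 1)·sin^{D-2}(φ)·exp(rR cos(φ)/σ²) dφ. -/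
/-!
Write `f s = exp (-s² / (2σ²)) * K_{D-2} (s R / σ²)` with
`K_k t = ∫₀^π sin^k φ · exp (t cos φ) dφ`. Differentiating under the integral sign and
integrating by parts against `(sin^(k+1))' = (k + 1) sin^k cos` gives
`K_k' t = t / (k + 1) * K_{k+2} t`, and with `sin^(k+2) = sin² · sin^k` the product rule
turns `f' r` into `exp (-r² / (2σ²))` times the integral of the statement.
-/

open Real MeasureTheory intervalIntegral

theorem hasDerivAt_intervalIntegral_mul_exp_mul {u v : ℝ → ℝ} (hu : Continuous u)
    (hv : Continuous v) (a b t : ℝ) :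
    HasDerivAt (fun s => ∫ φ in a..b, u φ * exp (s * v φ))
      (∫ φ in a..b, u φ * v φ * exp (t * v φ)) t := by
  have hF : ∀ s, Continuous fun φ => u φ * exp (s * v φ) := fun s => by fun_prop
  have hbound : ∀ φ, ∀ s ∈ Metric.ball t 1,
      ‖u φ * v φ * exp (s * v φ)‖ ≤ |u φ * v φ| * exp ((|t| + 1) * |v φ|) := by
    intro φ s hs
    have hst : |s| ≤ |t| + 1 := by
      have := abs_sub_abs_le_abs_sub s t
      rw [Metric.mem_ball, Real.dist_eq] at hs
      linarith
    rw [norm_mul, Real.norm_eq_abs, Real.norm_of_nonneg (exp_pos _).le]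
    gcongr ?_ * exp ?_
    calc s * v φ ≤ |s| * |v φ| := abs_mul s (v φ) ▸ le_abs_self _
      _ ≤ (|t| + 1) * |v φ| := by gcongr
  have hderiv : ∀ φ s,
      HasDerivAt (fun s => u φ * exp (s * v φ)) (u φ * v φ * exp (s * v φ)) s := fun φ s =>
    ((hasDerivAt_mul_const (v φ)).exp.const_mul (u φ)).congr_deriv (by ring)
  exact (hasDerivAt_integral_of_dominated_loc_of_deriv_le (Metric.ball_mem_nhds t one_pos)
    (.of_forall fun s => (hF s).aestronglyMeasurable) ((hF t).intervalIntegrable _ _)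
    (by fun_prop : Continuous fun φ => u φ * v φ * exp (t * v φ)).aestronglyMeasurable
    (ae_of_all _ fun φ _ => hbound φ) ((by fun_prop : Continuous _).intervalIntegrable _ _)
    (ae_of_all _ fun φ _ s _ => hderiv φ s)).2

theorem integral_sin_pow_mul_cos_mul_exp (k : ℕ) (t : ℝ) :
    ∫ φ in 0..π, sin φ ^ k * cos φ * exp (t * cos φ) =
      t / (k + 1) * ∫ φ in 0..π, sin φ ^ (k + 2) * exp (t * cos φ) := by
  have hu : ∀ x ∈ Set.uIcc 0 π, HasDerivAt (fun φ => sin φ ^ (k + 1))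
      ((k + 1) * sin x ^ k * cos x) x := fun x _ =>
    ((hasDerivAt_sin x).fun_pow (k + 1)).congr_deriv (by simp)
  have hv : ∀ x ∈ Set.uIcc 0 π, HasDerivAt (fun φ => exp (t * cos φ))
      (exp (t * cos x) * (t * -sin x)) x := fun x _ =>
    ((hasDerivAt_cos x).const_mul t).exp
  have hparts := integral_mul_deriv_eq_deriv_mul hu hv
    ((by fun_prop : Continuous fun x => ((k:ℝ) + 1) * sin x ^ k * cos x).intervalIntegrable _ _)
    ((by fun_prop : Continuous fun x => exp (t * cos x) * (t * -sin x)).intervalIntegrable _ _)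
  simp only [sin_pi, sin_zero, zero_pow k.succ_ne_zero, zero_mul, sub_self, zero_sub] at hparts
  have hlhs : ∫ x in 0..π, sin x ^ (k + 1) * (exp (t * cos x) * (t * -sin x)) =
      -(t * ∫ φ in 0..π, sin φ ^ (k + 2) * exp (t * cos φ)) := by
    rw [← intervalIntegral.integral_const_mul, ← intervalIntegral.integral_neg]
    congr 1; funext φ; ring
  have hrhs : ∫ x in 0..π, ((k:ℝ) + 1) * sin x ^ k * cos x * exp (t * cos x) =
      (k + 1) * ∫ φ in 0..π, sin φ ^ k * cos φ * exp (t * cos φ) := by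
    rw [← intervalIntegral.integral_const_mul]
    congr 1; funext φ; ring
  rw [hlhs, hrhs, neg_inj] at hparts
  rw [div_mul_eq_mul_div, eq_div_iff (by positivity), hparts, mul_comm]

-- Up to a constant, `sinPowExpIntegral k t = t ^ (-ν) * I_ν t` with `ν = k / 2` (modified
-- Bessel function); `hasDerivAt_sinPowExpIntegral` is `(t ^ (-ν) I_ν)' = t ^ (-ν) I_{ν+1}`.
noncomputable def sinPowExpIntegral (k : ℕ) (t : ℝ) : ℝ :=
  ∫ φ in 0..π, sin φ ^ k * exp (t * cos φ)

theorem hasDerivAt_sinPowExpIntegral (k : ℕ) (t : ℝ) :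
    HasDerivAt (sinPowExpIntegral k) (t / (k + 1) * sinPowExpIntegral (k + 2) t) t := by
  unfold sinPowExpIntegral
  rw [← integral_sin_pow_mul_cos_mul_exp]
  exact hasDerivAt_intervalIntegral_mul_exp_mul (u := fun φ => sin φ ^ k) (by fun_prop)
    continuous_cos 0 π t

theorem integral_sin_sq_add_mul_sin_pow_mul_exp (a b : ℝ) (k : ℕ) (t : ℝ) :
    ∫ φ in 0..π, (a * sin φ ^ 2 + b) * sin φ ^ k * exp (t * cos φ) =
      a * sinPowExpIntegral (k + 2) t + b * sinPowExpIntegral k t := by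
  have hint : ∀ (c : ℝ) (j : ℕ),
      IntervalIntegrable (fun φ => c * (sin φ ^ j * exp (t * cos φ))) volume 0 π := fun c j =>
    (by fun_prop : Continuous _).intervalIntegrable ..
  rw [sinPowExpIntegral, sinPowExpIntegral, ← intervalIntegral.integral_const_mul,
    ← intervalIntegral.integral_const_mul, ← integral_add (hint a _) (hint b _)]
  congr 1; funext φ; ring

theorem hasDerivAt_gaussian_mul_sinPowExpIntegral (k : ℕ) (a σ r : ℝ) :
    HasDerivAt (fun s => exp (-s ^ 2 / (2 * σ ^ 2)) * sinPowExpIntegral k (s * a))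
      (exp (-r ^ 2 / (2 * σ ^ 2)) * (r * a ^ 2 / (k + 1) * sinPowExpIntegral (k + 2) (r * a) +
        -(r / σ ^ 2) * sinPowExpIntegral k (r * a))) r := by
  have hexponent : HasDerivAt (fun s => -s ^ 2 / (2 * σ ^ 2)) (-(r / σ ^ 2)) r :=
    (((hasDerivAt_pow 2 r).fun_neg).div_const (2 * σ ^ 2)).congr_deriv (by norm_num; ring)
  refine (hexponent.exp.mul ((hasDerivAt_sinPowExpIntegral k (r * a)).comp r
    (hasDerivAt_mul_const a))).congr_deriv ?_
  simp only [Function.comp]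
  ring

theorem stmt_1_general (D : ℕ) (hD : 2 ≤ D) (R σ : ℝ)
    (r : ℝ)
    (f : ℝ → ℝ)
    (hf : ∀ s : ℝ, f s = Real.exp (-s ^ 2 / (2 * σ ^ 2)) *
      ∫ φ in (0:ℝ)..Real.pi,
        Real.sin φ ^ (D - 2) * Real.exp (s * R * Real.cos φ / σ ^ 2)) :
    ∃ c : ℝ, 0 < c ∧ deriv f r =
      c * ∫ φ in (0:ℝ)..Real.pi,
        (r / σ ^ 2) * (R ^ 2 * Real.sin φ ^ 2 / ((D - 1) * σ ^ 2) - 1) *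
          Real.sin φ ^ (D - 2) * Real.exp (r * R * Real.cos φ / σ ^ 2) := by
  obtain ⟨k, rfl⟩ : ∃ k, D = k + 2 := ⟨D - 2, by omega⟩
  simp only [Nat.add_sub_cancel] at hf ⊢
  have hf_eq :
      f = fun s => exp (-s ^ 2 / (2 * σ ^ 2)) * sinPowExpIntegral k (s * (R / σ ^ 2)) := by
    funext s
    rw [hf, sinPowExpIntegral]
    congr 2; funext φ; ring_nf
  have hintegrand : ∀ φ, r / σ ^ 2 * (R ^ 2 * sin φ ^ 2 / ((↑(k + 2) - 1) * σ ^ 2) - 1) *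
      sin φ ^ k * exp (r * R * cos φ / σ ^ 2) =
      (r * (R / σ ^ 2) ^ 2 / (k + 1) * sin φ ^ 2 + -(r / σ ^ 2)) * sin φ ^ k *
        exp (r * (R / σ ^ 2) * cos φ) := by
    intro φ
    push_cast
    rw [← div_div, show (k : ℝ) + 2 - 1 = k + 1 by ring,
      show r * R * cos φ / σ ^ 2 = r * (R / σ ^ 2) * cos φ by ring]
    ring
  refine ⟨exp (-r ^ 2 / (2 * σ ^ 2)), exp_pos _, ?_⟩
  rw [hf_eq, (hasDerivAt_gaussian_mul_sinPowExpIntegral k _ σ r).deriv,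
    integral_congr fun φ _ => hintegrand φ, integral_sin_sq_add_mul_sin_pow_mul_exp]

theorem stmt_1 (D : ℕ) (hD : 2 ≤ D) (R σ : ℝ) (hR : 0 < R) (hσ : 0 < σ)
    (r : ℝ) (hr : 0 ≤ r)
    (f : ℝ → ℝ)
    (hf : ∀ s : ℝ, f s = Real.exp (-s ^ 2 / (2 * σ ^ 2)) *
      ∫ φ in (0:ℝ)..Real.pi,
        Real.sin φ ^ (D - 2) * Real.exp (s * R * Real.cos φ / σ ^ 2)) :
    ∃ c : ℝ, 0 < c ∧ deriv f r =
      c * ∫ φ in (0:ℝ)..Real.pi,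
        (r / σ ^ 2) * (R ^ 2 * Real.sin φ ^ 2 / ((D - 1) * σ ^ 2) - 1) *
          Real.sin φ ^ (D - 2) * Real.exp (r * R * Real.cos φ / σ ^ 2) :=
  stmt_1_general D hD R σ r f hf
end

section
/- If σ ≥ R/√(D−1) and D ≥ 2, then among all rotationally invariant mixing distributions supported on spheres {S_{D−1}(r) : r ≥ 0}, the mixture density (uniform on S_{D−1}(r)) convolved with N(0,σ²I_D), evaluated at any fixed point x with ‖x‖ = R, is maximized at r = 0, i.e., by the pure Gaussian N(0, σ²I_D). -/
open Real MeasureTheory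

/-- Key lemma: for a rotation-invariant probability measure concentrated (a.e.) on the
sphere of radius `r`, the Laplace transform at `u` is at most `exp (‖u‖² r² / (2D))`. -/
lemma vae_key {D : ℕ} (hD : 1 ≤ D) (r : ℝ)
    (ν : Measure (EuclideanSpace ℝ (Fin D))) [IsProbabilityMeasure ν]
    (hsph : ∀ᵐ m ∂ν, ‖m‖ = r)
    (hinv : ∀ T : EuclideanSpace ℝ (Fin D) ≃ₗᵢ[ℝ] EuclideanSpace ℝ (Fin D),
      Measure.map T ν = ν)
    (u : EuclideanSpace ℝ (Fin D)) :
    ∫ m, Real.exp (inner ℝ u m : ℝ) ∂ν ≤ Real.exp (‖u‖ ^ 2 * r ^ 2 / (2 * D)) := by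
  have hDpos : (0 : ℝ) < D := by exact_mod_cast hD
  set s : ℝ := ‖u‖ / Real.sqrt D with hs_def
  have hs : 0 ≤ s := div_nonneg (norm_nonneg _) (Real.sqrt_nonneg _)
  -- corner vectors
  set y : Finset (Fin D) → EuclideanSpace ℝ (Fin D) :=
    fun t => (WithLp.equiv 2 (Fin D → ℝ)).symm (fun i => if i ∈ t then s else -s) with hy_def
  have hyapp : ∀ t i, y t i = if i ∈ t then s else -s := fun t i => rfl
  have hynorm : ∀ t, ‖y t‖ = ‖u‖ := by
    intro t
    rw [EuclideanSpace.norm_eq]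
    have h1 : ∑ i : Fin D, ‖y t i‖ ^ 2 = D * s ^ 2 := by
      simp [hyapp, apply_ite]
    rw [h1, Real.sqrt_mul (le_of_lt hDpos), Real.sqrt_sq hs, hs_def,
      mul_div_cancel₀ _ (by positivity : Real.sqrt D ≠ 0)]
  -- integrability
  have hmeas : ∀ v : EuclideanSpace ℝ (Fin D),
      AEStronglyMeasurable (fun m => Real.exp (inner ℝ v m : ℝ)) ν :=
    fun v => ((continuous_const.inner continuous_id).rexp).aestronglyMeasurable
  have hInt : ∀ v : EuclideanSpace ℝ (Fin D),
      Integrable (fun m => Real.exp (inner ℝ v m : ℝ)) ν := by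
    intro v
    refine Integrable.mono' (integrable_const (Real.exp (‖v‖ * r))) (hmeas v) ?_
    filter_upwards [hsph] with m hm
    rw [Real.norm_eq_abs, abs_of_pos (Real.exp_pos _), Real.exp_le_exp]
    calc (inner ℝ v m : ℝ) ≤ ‖v‖ * ‖m‖ := real_inner_le_norm v m
      _ = ‖v‖ * r := by rw [hm]
  -- invariance: each corner gives the same integral
  have hIeq : ∀ t : Finset (Fin D),
      ∫ m, Real.exp (inner ℝ u m : ℝ) ∂ν = ∫ m, Real.exp (inner ℝ (y t) m : ℝ) ∂ν := by
    intro t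
    set T := Submodule.reflection (ℝ ∙ (y t - u))ᗮ with hT_def
    have hTy : T (y t) = u := Submodule.reflection_sub (by rw [hynorm])
    calc ∫ m, Real.exp (inner ℝ u m : ℝ) ∂ν
        = ∫ m, Real.exp (inner ℝ u m : ℝ) ∂(Measure.map T ν) := by rw [hinv T]
      _ = ∫ m, Real.exp (inner ℝ u (T m) : ℝ) ∂ν := by
          rw [integral_map (T.continuous.measurable.aemeasurable)
            (by rw [hinv T]; exact hmeas u)]
      _ = ∫ m, Real.exp (inner ℝ (y t) m : ℝ) ∂ν := by
          congr 1; ext m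
          rw [← hTy, LinearIsometryEquiv.inner_map_map]
  -- pointwise bound on the average over corners
  have hpt : ∀ᵐ m ∂ν, ∑ t ∈ (Finset.univ : Finset (Fin D)).powerset,
      Real.exp (inner ℝ (y t) m : ℝ) ≤ 2 ^ D * Real.exp (‖u‖ ^ 2 * r ^ 2 / (2 * D)) := by
    filter_upwards [hsph] with m hm
    have hsum : ∀ t : Finset (Fin D), (inner ℝ (y t) m : ℝ)
        = ∑ i : Fin D, (if i ∈ t then s else -s) * m i := by
      intro t
      simp [PiLp.inner_apply, RCLike.inner_apply, conj_trivial, hyapp, mul_comm]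
    have hmsq : ∑ i : Fin D, m i ^ 2 = r ^ 2 := by
      have := EuclideanSpace.norm_eq m
      rw [hm] at this
      have h2 : r ^ 2 = (Real.sqrt (∑ i : Fin D, ‖m i‖ ^ 2)) ^ 2 := by rw [← this]
      rw [h2, Real.sq_sqrt (by positivity)]
      simp [sq_abs]
    calc ∑ t ∈ (Finset.univ : Finset (Fin D)).powerset, Real.exp (inner ℝ (y t) m : ℝ)
        = ∑ t ∈ (Finset.univ : Finset (Fin D)).powerset,
            (∏ i ∈ t, Real.exp (s * m i)) * ∏ i ∈ Finset.univ \ t, Real.exp (-s * m i) := by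
          refine Finset.sum_congr rfl fun t ht => ?_
          rw [hsum t, Real.exp_sum, ← Finset.prod_sdiff (Finset.subset_univ t), mul_comm]
          congr 1
          · exact Finset.prod_congr rfl fun i hi => by rw [if_pos hi]
          · exact Finset.prod_congr rfl fun i hi =>
              by rw [if_neg (Finset.mem_sdiff.mp hi).2, neg_mul]
      _ = ∏ i : Fin D, (Real.exp (s * m i) + Real.exp (-s * m i)) := by
          rw [Finset.prod_add]
      _ ≤ ∏ i : Fin D, 2 * Real.exp ((s * m i) ^ 2 / 2) := by
          refine Finset.prod_le_prod (fun i _ => by positivity) (fun i _ => ?_)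
          have h := Real.cosh_le_exp_half_sq (s * m i)
          rw [Real.cosh_eq] at h
          have hneg : -s * m i = -(s * m i) := by ring
          rw [hneg]
          linarith
      _ = 2 ^ D * Real.exp (‖u‖ ^ 2 * r ^ 2 / (2 * D)) := by
          rw [Finset.prod_mul_distrib, Finset.prod_const, ← Real.exp_sum]
          simp only [Finset.card_univ, Fintype.card_fin]
          congr 1
          have : ∑ i : Fin D, (s * m i) ^ 2 / 2 = s ^ 2 * (∑ i : Fin D, m i ^ 2) / 2 := by
            rw [Finset.mul_sum, Finset.sum_div]
            refine Finset.sum_congr rfl fun i _ => by ring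
          rw [this, hmsq, hs_def, div_pow, Real.sq_sqrt (le_of_lt hDpos)]
          ring
  -- put it together
  have hcard : ((Finset.univ : Finset (Fin D)).powerset.card : ℝ) = 2 ^ D := by
    rw [Finset.card_powerset]; simp
  have h2D : (0 : ℝ) < 2 ^ D := by positivity
  have hmain : (2 ^ D : ℝ) * ∫ m, Real.exp (inner ℝ u m : ℝ) ∂ν
      ≤ 2 ^ D * Real.exp (‖u‖ ^ 2 * r ^ 2 / (2 * D)) := by
    calc (2 ^ D : ℝ) * ∫ m, Real.exp (inner ℝ u m : ℝ) ∂ν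
        = ∑ t ∈ (Finset.univ : Finset (Fin D)).powerset,
            ∫ m, Real.exp (inner ℝ (y t) m : ℝ) ∂ν := by
          rw [Finset.sum_congr rfl (fun t _ => (hIeq t).symm), Finset.sum_const, nsmul_eq_mul,
            hcard]
      _ = ∫ m, ∑ t ∈ (Finset.univ : Finset (Fin D)).powerset,
            Real.exp (inner ℝ (y t) m : ℝ) ∂ν := by
          rw [integral_finset_sum _ (fun t _ => hInt (y t))]
      _ ≤ ∫ _m, 2 ^ D * Real.exp (‖u‖ ^ 2 * r ^ 2 / (2 * D)) ∂ν := by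
          refine integral_mono_ae (integrable_finset_sum _ (fun t _ => hInt (y t)))
            (integrable_const _) hpt
      _ = 2 ^ D * Real.exp (‖u‖ ^ 2 * r ^ 2 / (2 * D)) := by
          rw [integral_const]; simp
  exact le_of_mul_le_mul_left hmain h2D

/-- Reformulation of Theorem 1: if `σ ≥ R/√(D-1)`, then among all rotationally invariant
mixing distributions supported on centered spheres, the Gaussian mixture density at any
point `x` with `‖x‖ = R` is maximized at radius `r = 0`, i.e. by the pure Gaussian
`N(0, σ²I_D)` (whose density at `x` is the right-hand side). -/
theorem stmt_13 (D : ℕ) (hD : 2 ≤ D) (R σ : ℝ) (hR : 0 < R) (hσ : 0 < σ)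
    (hσR : σ ≥ R / Real.sqrt (D - 1))
    (x : EuclideanSpace ℝ (Fin D)) (hx : ‖x‖ = R) :
    ∀ r : ℝ, 0 ≤ r →
      ∀ ν : Measure (EuclideanSpace ℝ (Fin D)), IsProbabilityMeasure ν →
        ν (Metric.sphere (0 : EuclideanSpace ℝ (Fin D)) r) = 1 →
        (∀ T : EuclideanSpace ℝ (Fin D) ≃ₗᵢ[ℝ] EuclideanSpace ℝ (Fin D),
          Measure.map T ν = ν) →
        (∫ m, (1 / (Real.sqrt (2 * Real.pi) * σ) ^ D) *
            Real.exp (-‖x - m‖ ^ 2 / (2 * σ ^ 2)) ∂ν) ≤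
          (1 / (Real.sqrt (2 * Real.pi) * σ) ^ D) *
            Real.exp (-R ^ 2 / (2 * σ ^ 2)) := by
  intro r hr ν hν hsph hinv
  haveI := hν
  have hD1 : (1 : ℝ) ≤ (D : ℝ) - 1 := by
    have : (2 : ℝ) ≤ (D : ℝ) := by exact_mod_cast hD
    linarith
  have hDpos : (0 : ℝ) < D := by positivity
  -- a.e. the norm is r
  have hae : ∀ᵐ m ∂ν, ‖m‖ = r := by
    have hcompl : ν (Metric.sphere (0 : EuclideanSpace ℝ (Fin D)) r)ᶜ = 0 := by
      rw [measure_compl Metric.isClosed_sphere.measurableSet (measure_ne_top ν _), hsph,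
        measure_univ]
      simp
    refine measure_mono_null (fun m hm => ?_) hcompl
    simp only [Set.mem_compl_iff, Metric.mem_sphere, dist_zero_right] at *
    exact hm
  -- the key bound with u = σ⁻² x
  set u : EuclideanSpace ℝ (Fin D) := (σ ^ 2)⁻¹ • x with hu_def
  have hunorm : ‖u‖ = R / σ ^ 2 := by
    rw [hu_def, norm_smul, hx, norm_inv, Real.norm_eq_abs, abs_of_pos (by positivity)]
    rw [inv_mul_eq_div]
  have hkey : ∫ m, Real.exp (inner ℝ u m : ℝ) ∂ν
      ≤ Real.exp (‖u‖ ^ 2 * r ^ 2 / (2 * D)) :=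
    vae_key (by omega) r ν hae hinv u
  -- exponent comparison
  have hR2 : R ^ 2 ≤ σ ^ 2 * ((D : ℝ) - 1) := by
    have hsqrt : 0 < Real.sqrt ((D : ℝ) - 1) := Real.sqrt_pos.mpr (by linarith)
    have hRle : R ≤ σ * Real.sqrt ((D : ℝ) - 1) := by
      rw [ge_iff_le, div_le_iff₀ hsqrt] at hσR
      exact hσR
    calc R ^ 2 ≤ (σ * Real.sqrt ((D : ℝ) - 1)) ^ 2 := by
          exact pow_le_pow_left₀ hR.le hRle 2
      _ = σ ^ 2 * ((D : ℝ) - 1) := by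
          rw [mul_pow, Real.sq_sqrt (by linarith)]
  have hexp : Real.exp (-(R ^ 2 + r ^ 2) / (2 * σ ^ 2))
      * Real.exp (‖u‖ ^ 2 * r ^ 2 / (2 * D)) ≤ Real.exp (-R ^ 2 / (2 * σ ^ 2)) := by
    rw [← Real.exp_add, Real.exp_le_exp, hunorm]
    have h1 : (R / σ ^ 2) ^ 2 * r ^ 2 / (2 * D) ≤ r ^ 2 / (2 * σ ^ 2) := by
      rw [div_pow, div_mul_eq_mul_div, div_div, div_le_div_iff₀ (by positivity) (by positivity)]
      have h0 : R ^ 2 ≤ σ ^ 2 * D := by nlinarith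
      have h3 : R ^ 2 * (r ^ 2 * (2 * σ ^ 2)) ≤ σ ^ 2 * (D : ℝ) * (r ^ 2 * (2 * σ ^ 2)) :=
        mul_le_mul_of_nonneg_right h0 (by positivity)
      nlinarith [h3]
    have h2 : -(R ^ 2 + r ^ 2) / (2 * σ ^ 2) = -R ^ 2 / (2 * σ ^ 2) - r ^ 2 / (2 * σ ^ 2) := by
      ring
    linarith
  -- rewrite the integrand a.e.
  have hcong : ∫ m, Real.exp (-‖x - m‖ ^ 2 / (2 * σ ^ 2)) ∂ν
      = Real.exp (-(R ^ 2 + r ^ 2) / (2 * σ ^ 2)) * ∫ m, Real.exp (inner ℝ u m : ℝ) ∂ν := by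
    rw [← integral_const_mul]
    refine integral_congr_ae ?_
    filter_upwards [hae] with m hm
    rw [← Real.exp_add]
    congr 1
    have hns : ‖x - m‖ ^ 2 = ‖x‖ ^ 2 - 2 * (inner ℝ x m : ℝ) + ‖m‖ ^ 2 := norm_sub_sq_real x m
    have hiu : (inner ℝ u m : ℝ) = (σ ^ 2)⁻¹ * (inner ℝ x m : ℝ) := real_inner_smul_left x m _
    rw [hns, hx, hm, hiu]
    field_simp
    ring
  -- conclude
  have hC : (0 : ℝ) ≤ 1 / (Real.sqrt (2 * Real.pi) * σ) ^ D := by positivity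
  rw [integral_const_mul]
  refine mul_le_mul_of_nonneg_left ?_ hC
  rw [hcong]
  calc Real.exp (-(R ^ 2 + r ^ 2) / (2 * σ ^ 2)) * ∫ m, Real.exp (inner ℝ u m : ℝ) ∂ν
      ≤ Real.exp (-(R ^ 2 + r ^ 2) / (2 * σ ^ 2))
        * Real.exp (‖u‖ ^ 2 * r ^ 2 / (2 * D)) := by
        exact mul_le_mul_of_nonneg_left hkey (Real.exp_pos _).le
    _ ≤ Real.exp (-R ^ 2 / (2 * σ ^ 2)) := hexp
end

section
/- For a ≥ 0, the function F(a) = I₁(a)/I₀(a) (ratio of modified Bessel functions of the first kind) is strictly increasing, F(0) = 0, and F(a) < 1 for all a ≥ 0. -/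
open Real intervalIntegral

/-- `I₀(a) = (1/π) ∫₀^π e^{a cos φ} dφ`. -/
noncomputable def besselI0 (a : ℝ) : ℝ :=
  (1 / Real.pi) * ∫ φ in (0:ℝ)..Real.pi, Real.exp (a * Real.cos φ)

/-- `I₁(a) = (1/π) ∫₀^π cos φ · e^{a cos φ} dφ`. -/
noncomputable def besselI1 (a : ℝ) : ℝ :=
  (1 / Real.pi) * ∫ φ in (0:ℝ)..Real.pi, Real.cos φ * Real.exp (a * Real.cos φ)

namespace BesselAux

noncomputable def A0 (a : ℝ) : ℝ := ∫ φ in (0:ℝ)..Real.pi, Real.exp (a * Real.cos φ)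
noncomputable def A1 (a : ℝ) : ℝ := ∫ φ in (0:ℝ)..Real.pi, Real.cos φ * Real.exp (a * Real.cos φ)

lemma cont0 (a : ℝ) : Continuous fun φ => Real.exp (a * Real.cos φ) := by fun_prop
lemma cont1 (a : ℝ) : Continuous fun φ => Real.cos φ * Real.exp (a * Real.cos φ) := by fun_prop

lemma A0_pos (a : ℝ) : 0 < A0 a := by
  apply intervalIntegral_pos_of_pos ((cont0 a).intervalIntegrable _ _)
  · exact fun x => Real.exp_pos _
  · exact Real.pi_pos

lemma cos_lt_one' {φ : ℝ} (h0 : 0 < φ) (hπ : φ ≤ Real.pi) : Real.cos φ < 1 := by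
  have := Real.strictAntiOn_cos (Set.mem_Icc.2 ⟨le_refl 0, Real.pi_pos.le⟩)
    (Set.mem_Icc.2 ⟨h0.le, hπ⟩) h0
  simpa using this

lemma A1_lt_A0 (a : ℝ) : A1 a < A0 a := by
  have key : 0 < ∫ φ in (0:ℝ)..Real.pi,
      (Real.exp (a * Real.cos φ) - Real.cos φ * Real.exp (a * Real.cos φ)) := by
    apply intervalIntegral_pos_of_pos_on
      (((cont0 a).sub (cont1 a)).intervalIntegrable _ _)
    · intro x hx
      have h1 : Real.cos x < 1 := cos_lt_one' hx.1 hx.2.le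
      have h2 : 0 < Real.exp (a * Real.cos x) := Real.exp_pos _
      show 0 < Real.exp (a * Real.cos x) - Real.cos x * Real.exp (a * Real.cos x)
      nlinarith
    · exact Real.pi_pos
  have := intervalIntegral.integral_sub (μ := MeasureTheory.volume)
      ((cont0 a).intervalIntegrable 0 Real.pi) ((cont1 a).intervalIntegrable 0 Real.pi)
  rw [this] at key
  unfold A0 A1
  linarith

/-- generic expansion of a linear combination of the four basic integrals -/
lemma expand (c1 c2 c3 c4 a b : ℝ) :
    (∫ φ in (0:ℝ)..Real.pi,
      (c1 * Real.exp (a * Real.cos φ) + c2 * (Real.cos φ * Real.exp (a * Real.cos φ))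
        + c3 * Real.exp (b * Real.cos φ) + c4 * (Real.cos φ * Real.exp (b * Real.cos φ))))
      = c1 * A0 a + c2 * A1 a + c3 * A0 b + c4 * A1 b := by
  have i1 : IntervalIntegrable (fun φ => c1 * Real.exp (a * Real.cos φ))
      MeasureTheory.volume 0 Real.pi := (by fun_prop : Continuous _).intervalIntegrable _ _
  have i2 : IntervalIntegrable (fun φ => c2 * (Real.cos φ * Real.exp (a * Real.cos φ)))
      MeasureTheory.volume 0 Real.pi := (by fun_prop : Continuous _).intervalIntegrable _ _
  have i3 : IntervalIntegrable (fun φ => c3 * Real.exp (b * Real.cos φ))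
      MeasureTheory.volume 0 Real.pi := (by fun_prop : Continuous _).intervalIntegrable _ _
  have i4 : IntervalIntegrable (fun φ => c4 * (Real.cos φ * Real.exp (b * Real.cos φ)))
      MeasureTheory.volume 0 Real.pi := (by fun_prop : Continuous _).intervalIntegrable _ _
  rw [intervalIntegral.integral_add (i1.add i2 |>.add i3) i4,
      intervalIntegral.integral_add (i1.add i2) i3,
      intervalIntegral.integral_add i1 i2,
      intervalIntegral.integral_const_mul, intervalIntegral.integral_const_mul,
      intervalIntegral.integral_const_mul, intervalIntegral.integral_const_mul]
  rfl

/-- the symmetrized kernel -/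
noncomputable def h (a b φ ψ : ℝ) : ℝ :=
  (Real.cos ψ - Real.cos φ) *
    (Real.exp (a * Real.cos φ) * Real.exp (b * Real.cos ψ)
      - Real.exp (a * Real.cos ψ) * Real.exp (b * Real.cos φ))

lemma h_nonneg {a b : ℝ} (hab : a ≤ b) (φ ψ : ℝ) : 0 ≤ h a b φ ψ := by
  unfold h
  set x := Real.cos φ
  set y := Real.cos ψ
  rcases le_total x y with hxy | hxy
  · have h2 : a * y + b * x ≤ a * x + b * y := by nlinarith
    have := Real.exp_le_exp.2 h2
    rw [Real.exp_add, Real.exp_add] at this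
    nlinarith
  · have h2 : a * x + b * y ≤ a * y + b * x := by nlinarith
    have := Real.exp_le_exp.2 h2
    rw [Real.exp_add, Real.exp_add] at this
    nlinarith

lemma h_pos {a b : ℝ} (hab : a < b) {φ ψ : ℝ} (hne : Real.cos φ ≠ Real.cos ψ) :
    0 < h a b φ ψ := by
  unfold h
  set x := Real.cos φ
  set y := Real.cos ψ
  rcases lt_or_gt_of_ne hne with hxy | hxy
  · have h2 : a * y + b * x < a * x + b * y := by nlinarith
    have := Real.exp_lt_exp.2 h2
    rw [Real.exp_add, Real.exp_add] at this
    nlinarith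
  · have h2 : a * x + b * y < a * y + b * x := by nlinarith
    have := Real.exp_lt_exp.2 h2
    rw [Real.exp_add, Real.exp_add] at this
    nlinarith

lemma h_cont (a b : ℝ) : Continuous fun p : ℝ × ℝ => h a b p.2 p.1 := by
  unfold h; fun_prop

/-- the inner integral, expanded -/
lemma inner_eq (a b ψ : ℝ) :
    (∫ φ in (0:ℝ)..Real.pi, h a b φ ψ)
      = (Real.cos ψ * Real.exp (b * Real.cos ψ)) * A0 a
        + (-Real.exp (b * Real.cos ψ)) * A1 a
        + (-(Real.cos ψ * Real.exp (a * Real.cos ψ))) * A0 b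
        + (Real.exp (a * Real.cos ψ)) * A1 b := by
  rw [← expand]
  apply intervalIntegral.integral_congr
  intro φ _
  unfold h
  ring

lemma g_pos {a b : ℝ} (hab : a < b) {ψ : ℝ} (hψ : ψ ∈ Set.Ioo (0:ℝ) Real.pi) :
    0 < ∫ φ in (0:ℝ)..Real.pi, h a b φ ψ := by
  have hint : ∀ u v : ℝ, IntervalIntegrable (fun φ => h a b φ ψ)
      MeasureTheory.volume u v := by
    intro u v
    exact ((h_cont a b).comp (by fun_prop : Continuous fun φ : ℝ => ((ψ:ℝ), φ))).intervalIntegrable _ _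
  rw [← intervalIntegral.integral_add_adjacent_intervals (hint 0 ψ) (hint ψ Real.pi)]
  have h1 : 0 < ∫ φ in (0:ℝ)..ψ, h a b φ ψ := by
    apply intervalIntegral_pos_of_pos_on (hint 0 ψ)
    · intro x hx
      apply h_pos hab
      intro hcos
      have := Real.strictAntiOn_cos (Set.mem_Icc.2 ⟨hx.1.le, (hx.2.trans hψ.2).le⟩)
        (Set.mem_Icc.2 ⟨hψ.1.le, hψ.2.le⟩) hx.2
      rw [hcos] at this
      exact lt_irrefl _ this
    · exact hψ.1
  have h2 : 0 ≤ ∫ φ in ψ..Real.pi, h a b φ ψ := by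
    apply intervalIntegral.integral_nonneg hψ.2.le
    intro x _
    exact h_nonneg hab.le x ψ
  linarith

lemma key_ineq {a b : ℝ} (hab : a < b) : A1 a * A0 b < A0 a * A1 b := by
  have gcont : Continuous fun ψ => ∫ φ in (0:ℝ)..Real.pi, h a b φ ψ := by
    exact intervalIntegral.continuous_parametric_intervalIntegral_of_continuous'
      (f := fun ψ φ => h a b φ ψ) (h_cont a b) 0 Real.pi
  have S_pos : 0 < ∫ ψ in (0:ℝ)..Real.pi, ∫ φ in (0:ℝ)..Real.pi, h a b φ ψ := by
    apply intervalIntegral_pos_of_pos_on (gcont.intervalIntegrable _ _)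
    · exact fun ψ hψ => g_pos hab hψ
    · exact Real.pi_pos
  have S_eq : (∫ ψ in (0:ℝ)..Real.pi, ∫ φ in (0:ℝ)..Real.pi, h a b φ ψ)
      = 2 * (A0 a * A1 b - A1 a * A0 b) := by
    have step1 : (∫ ψ in (0:ℝ)..Real.pi, ∫ φ in (0:ℝ)..Real.pi, h a b φ ψ)
        = ∫ ψ in (0:ℝ)..Real.pi,
            ((A0 a) * (Real.cos ψ * Real.exp (b * Real.cos ψ))
              + (-(A1 a)) * Real.exp (b * Real.cos ψ)
              + (-(A0 b)) * (Real.cos ψ * Real.exp (a * Real.cos ψ))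
              + (A1 b) * Real.exp (a * Real.cos ψ)) := by
      apply intervalIntegral.integral_congr
      intro ψ _
      dsimp only
      rw [inner_eq a b ψ]
      ring
    rw [step1]
    have := expand (-(A1 a)) (A0 a) (A1 b) (-(A0 b)) b a
    rw [show (∫ ψ in (0:ℝ)..Real.pi,
            ((A0 a) * (Real.cos ψ * Real.exp (b * Real.cos ψ))
              + (-(A1 a)) * Real.exp (b * Real.cos ψ)
              + (-(A0 b)) * (Real.cos ψ * Real.exp (a * Real.cos ψ))
              + (A1 b) * Real.exp (a * Real.cos ψ)))
        = ∫ ψ in (0:ℝ)..Real.pi,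
            ((-(A1 a)) * Real.exp (b * Real.cos ψ)
              + (A0 a) * (Real.cos ψ * Real.exp (b * Real.cos ψ))
              + (A1 b) * Real.exp (a * Real.cos ψ)
              + (-(A0 b)) * (Real.cos ψ * Real.exp (a * Real.cos ψ))) from
      intervalIntegral.integral_congr (fun ψ _ => by ring), this]
    ring
  rw [S_eq] at S_pos
  linarith

lemma bessel_ratio (a : ℝ) : besselI1 a / besselI0 a = A1 a / A0 a := by
  unfold besselI1 besselI0
  rw [mul_div_mul_left]
  · rfl
  · positivity

end BesselAux

theorem stmt_15 :
    StrictMonoOn (fun a => besselI1 a / besselI0 a) (Set.Ici (0:ℝ)) ∧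
      besselI1 0 / besselI0 0 = 0 ∧
      ∀ a : ℝ, 0 ≤ a → besselI1 a / besselI0 a < 1 := by
  refine ⟨?_, ?_, ?_⟩
  · intro a _ b _ hab
    simp only [BesselAux.bessel_ratio]
    rw [div_lt_div_iff₀ (BesselAux.A0_pos a) (BesselAux.A0_pos b)]
    have := BesselAux.key_ineq hab
    linarith
  · rw [BesselAux.bessel_ratio]
    have : BesselAux.A1 0 = 0 := by
      unfold BesselAux.A1
      simp [integral_cos]
    rw [this, zero_div]
  · intro a _
    rw [BesselAux.bessel_ratio, div_lt_one (BesselAux.A0_pos a)]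
    exact BesselAux.A1_lt_A0 a
end
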